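/- arXiv:1301.1776 — 2 statements merged into one kernel-verified Lean document; each statement's English description precedes it below -/
import Mathlib

section
/- Let ν = (ν₁,…,νₙ) be a vector of nonzero integers. The Laurent polynomial x^ν - 1 = x₁^{ν₁}⋯xₙ^{νₙ} - 1 is irreducible in ℤ[x₁,x₁⁻¹,…,xₙ,xₙ⁻¹] if and only if gcd(ν₁,…,νₙ) = 1. -/
/-- The Laurent polynomial ring in `n` variables over `ℤ`. -/
abbrev LaurentMv (n : ℕ) : Type := AddMonoidAlgebra ℤ (Fin n → ℤ)

/-- The monomial `x^ν` in the Laurent polynomial ring. -/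
noncomputable def laurentMonomial {n : ℕ} (ν : Fin n → ℤ) : LaurentMv n :=
  AddMonoidAlgebra.single ν (1 : ℤ)

/-!
If `d = gcd ν` and `ν = d • μ`, then `x^ν - 1 = (1 + x^μ + ⋯ + x^{(d-1)μ}) (x^μ - 1)`, and the
first factor maps to `d` under the augmentation `x^w ↦ 1`, so it is a unit only when `d = 1`.

Conversely, if `gcd ν = 1`, Bézout gives `f : ℤⁿ →+ ℤ` with `f ν = 1`. The projection
`π w = w - f w • ν` kills `ν` and moves every `w` only along `ν`, so the ring endomorphism
`x^w ↦ x^{π w}` of the domain `ℤ[ℤⁿ]` annihilates `x^ν - 1` and is congruent to the identity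
modulo `x^ν - 1`. Hence `x^ν - 1 ∣ ab` forces it to divide `a` or `b`: it is prime.
-/

namespace AddMonoidAlgebra

variable {R G : Type*} [CommRing R] [AddCommGroup G]

lemma not_isUnit_single_sub_one [Nontrivial R] (v : G) : ¬IsUnit (single v 1 - 1 : R[G]) := by
  intro h
  simpa [one_def] using h.map (lift R R G 1)

lemma single_sub_one_dvd_single_zsmul_sub_one (v : G) (k : ℤ) :
    (single v 1 - 1 : R[G]) ∣ single (k • v) 1 - 1 := by
  induction k using Int.induction_on with
  | zero => simp [one_def]
  | succ k ih =>
    have : (single (((k : ℤ) + 1) • v) 1 - 1 : R[G])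
        = single v 1 * (single ((k : ℤ) • v) 1 - 1) + (single v 1 - 1) := by
      rw [mul_sub, single_mul_single, add_smul, one_smul, add_comm v, mul_one, mul_one]; ring
    rw [this]
    exact dvd_add (ih.mul_left _) dvd_rfl
  | pred k ih =>
    have : (single ((-(k : ℤ) - 1) • v) 1 - 1 : R[G])
        = (single (-(k : ℤ) • v) 1 - 1) - single ((-(k : ℤ) - 1) • v) 1 * (single v 1 - 1) := by
      rw [mul_sub, single_mul_single, sub_smul, one_smul, sub_add_cancel, mul_one, mul_one]; ring
    rw [this]
    exact dvd_sub ih (dvd_mul_left _ _)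

lemma single_sub_one_dvd_sub_mapDomainRingHom {v : G} (π : G →+ G)
    (hπ : ∀ w, ∃ k : ℤ, w = π w + k • v) (a : R[G]) :
    (single v 1 - 1 : R[G]) ∣ a - mapDomainRingHom R π a := by
  induction a using AddMonoidAlgebra.induction_linear with
  | zero => simp
  | add a b ha hb =>
    rw [map_add, add_sub_add_comm]
    exact dvd_add ha hb
  | single w r =>
    obtain ⟨k, hk⟩ := hπ w
    have : single w r - mapDomainRingHom R π (single w r)
        = single (π w) r * (single (k • v) 1 - 1) := by
      rw [mapDomainRingHom_apply, mapDomain_single, mul_sub, single_mul_single, mul_one, mul_one,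
        ← hk]
    rw [this]
    exact (single_sub_one_dvd_single_zsmul_sub_one v k).mul_left _

theorem prime_single_sub_one [Nontrivial R] [NoZeroDivisors R[G]] {v : G} (f : G →+ ℤ)
    (hf : f v = 1) : Prime (single v 1 - 1 : R[G]) := by
  set π : G →+ G := AddMonoidHom.id G - (zmultiplesHom G v).comp f
  have hπ : ∀ w, ∃ k : ℤ, w = π w + k • v := fun w ↦ ⟨f w, by simp [π]⟩
  have hπv : π v = 0 := by simp [π, hf]
  set φ := mapDomainRingHom R π
  have hφ : φ (single v 1 - 1) = 0 := by
    rw [map_sub, map_one, mapDomainRingHom_apply, mapDomain_single, hπv, ← one_def, sub_self]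
  have dvd_of_map_eq_zero {a : R[G]} (ha : φ a = 0) : single v 1 - 1 ∣ a := by
    have : single v 1 - 1 ∣ a - φ a := single_sub_one_dvd_sub_mapDomainRingHom π hπ a
    rwa [ha, sub_zero] at this
  refine ⟨fun h ↦ ?_, not_isUnit_single_sub_one v, fun a b ⟨c, hc⟩ ↦ ?_⟩
  · rw [sub_eq_zero, one_def, single_left_inj one_ne_zero] at h
    simp [h] at hf
  · have : φ a * φ b = 0 := by rw [← map_mul, hc, map_mul, hφ, zero_mul]
    exact (mul_eq_zero.mp this).imp dvd_of_map_eq_zero dvd_of_map_eq_zero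

theorem isUnit_natCast_of_irreducible_single_nsmul_sub_one [Nontrivial R] {d : ℕ} {u : G}
    (h : Irreducible (single (d • u) 1 - 1 : R[G])) : IsUnit (d : R) := by
  have hfac : (single (d • u) 1 - 1 : R[G])
      = (∑ i ∈ Finset.range d, single u 1 ^ i) * (single u 1 - 1) := by
    rw [geom_sum_mul, single_pow, one_pow]
  have hgeom := ((h.isUnit_or_isUnit hfac).resolve_right (not_isUnit_single_sub_one u)).map
    (lift R R G 1)
  simpa [single_pow] using hgeom

end AddMonoidAlgebra

lemma exists_eq_natAbs_gcd_nsmul {ι : Type*} [Fintype ι] (ν : ι → ℤ) :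
    ∃ μ : ι → ℤ, ν = (Finset.univ.gcd ν).natAbs • μ := by
  refine ⟨fun i ↦ ν i / (Finset.univ.gcd ν).natAbs, funext fun i ↦ ?_⟩
  have : ((Finset.univ.gcd ν).natAbs : ℤ) ∣ ν i :=
    Int.natAbs_dvd.mpr (Finset.gcd_dvd (Finset.mem_univ i))
  rw [Pi.smul_apply, nsmul_eq_mul, Int.mul_ediv_cancel' this]

theorem laurent_sub_one_irreducible_iff_gcd_eq_one_general (n : ℕ) (ν : Fin n → ℤ) :
    Irreducible (laurentMonomial ν - 1) ↔ Finset.univ.gcd ν = 1 := by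
  constructor
  · intro h
    obtain ⟨μ, hμ⟩ := exists_eq_natAbs_gcd_nsmul ν
    rw [laurentMonomial, hμ] at h
    have hd := AddMonoidAlgebra.isUnit_natCast_of_irreducible_single_nsmul_sub_one h
    rwa [Int.isUnit_iff_natAbs_eq, Int.natAbs_natCast, ← Int.natCast_inj, Int.natCast_natAbs,
      Int.abs_eq_normalize, Finset.normalize_gcd, Nat.cast_one] at hd
  · intro h
    obtain ⟨g, hg⟩ := Finset.univ.gcd_eq_sum_mul ν
    refine (AddMonoidAlgebra.prime_single_sub_one
      (Fintype.linearCombination ℤ g).toAddMonoidHom ?_).irreducible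
    simpa [Fintype.linearCombination_apply, ← h] using hg.symm

theorem laurent_sub_one_irreducible_iff_gcd_eq_one (n : ℕ) (ν : Fin n → ℤ)
    (hν : ∀ i, ν i ≠ 0) :
    Irreducible (laurentMonomial ν - 1) ↔ Finset.univ.gcd ν = 1 :=
  laurent_sub_one_irreducible_iff_gcd_eq_one_general n ν
end

section
/- Let a₁,…,aₙ ∈ ℤ^d generate ℤ^d with associated matrix A of rank d, and let w₁,…,w_{n-d} be a ℤ-basis of ker(Aᵀ) ⊆ ℤⁿ. Then a point x ∈ (ℂ*)ⁿ satisfies x^{wᵢ} = 1 for all i = 1,…,n-d if and only if there exists t ∈ (ℂ*)^d with x = (t^{a₁},…,t^{aₙ}). -/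
/-!
Send `x ∈ Gⁿ` to the character `χₓ : ℤⁿ → G, v ↦ x^v`, and let `φ : ℤⁿ → ℤᵈ, v ↦ ∑ vⱼ aⱼ`, whose
kernel is spanned by the `wᵢ`. Then `x^{wᵢ} = 1` for all `i` says exactly that `ker φ ≤ ker χₓ`.
Since `φ` is surjective, this holds iff `χₓ` factors as `ψ ∘ φ` for a character `ψ` of `ℤᵈ`, and
every such `ψ` is `χₜ` for `tₖ = ψ(eₖ)`; evaluating `χₓ = χₜ ∘ φ` at `eⱼ` gives `xⱼ = t^{aⱼ}`.
-/

theorem LinearMap.ker_le_ker_iff_exists_comp_eq {R M N P : Type*} [Ring R]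
    [AddCommGroup M] [AddCommGroup N] [AddCommGroup P] [Module R M] [Module R N] [Module R P]
    {φ : M →ₗ[R] N} (hφ : Function.Surjective φ) {χ : M →ₗ[R] P} :
    ker φ ≤ ker χ ↔ ∃ ψ : N →ₗ[R] P, ψ ∘ₗ φ = χ := by
  refine ⟨fun h => ⟨(ker φ).liftQ χ h ∘ₗ (φ.quotKerEquivOfSurjective hφ).symm, ?_⟩, ?_⟩
  · ext v
    have : (φ.quotKerEquivOfSurjective hφ).symm (φ v) = (ker φ).mkQ v :=
      (LinearEquiv.symm_apply_eq _).2 rfl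
    simp [this]
  · rintro ⟨ψ, rfl⟩
    exact ker_le_ker_comp φ ψ

theorem Fintype.ker_linearCombination_le_ker_iff {R M N ι : Type*} [CommRing R] [AddCommGroup M]
    [AddCommGroup N] [Module R M] [Module R N] [Fintype ι] {a : ι → N}
    (ha : Submodule.span R (Set.range a) = ⊤) (x : ι → M) :
    LinearMap.ker (Fintype.linearCombination R a) ≤ LinearMap.ker (Fintype.linearCombination R x) ↔
      ∃ ψ : N →ₗ[R] M, ∀ j, ψ (a j) = x j := by
  classical
  have hsurj : Function.Surjective (Fintype.linearCombination R a) := by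
    rw [← LinearMap.range_eq_top, Fintype.range_linearCombination, ha]
  rw [LinearMap.ker_le_ker_iff_exists_comp_eq hsurj]
  refine exists_congr fun ψ => ⟨fun h j => ?_, fun h => ?_⟩
  · simpa using LinearMap.congr_fun h (Pi.single j 1)
  · ext j
    simp [h]

theorem exists_linearMap_pi_apply_eq_iff {R M ι κ : Type*} [CommRing R] [AddCommGroup M]
    [Module R M] [Fintype κ] (a : ι → κ → R) (x : ι → M) :
    (∃ ψ : (κ → R) →ₗ[R] M, ∀ j, ψ (a j) = x j) ↔
      ∃ t : κ → M, ∀ j, x j = ∑ k, a j k • t k := by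
  classical
  constructor
  · rintro ⟨ψ, hψ⟩
    refine ⟨fun k => ψ (Pi.single k 1), fun j => ?_⟩
    rw [← hψ, LinearMap.pi_apply_eq_sum_univ]
    congr! with k
    simp [Pi.single_apply, eq_comm]
  · rintro ⟨t, ht⟩
    exact ⟨Fintype.linearCombination R t, fun j => (ht j).symm⟩

theorem Matrix.toLin'_of_transpose {R ι κ : Type*} [CommRing R] [Fintype ι] [DecidableEq ι]
    (a : ι → κ → R) :
    Matrix.toLin' (Matrix.of fun k i => a i k) = Fintype.linearCombination R a := by
  ext v k
  simp [Matrix.mulVec, dotProduct, Fintype.linearCombination_apply, mul_comm]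

theorem toMul_linearCombination_ofMul {G ι : Type*} [CommGroup G] [Fintype ι] (x : ι → G)
    (v : ι → ℤ) :
    (Fintype.linearCombination ℤ (Additive.ofMul ∘ x) v).toMul = ∏ j, x j ^ v j := by
  simp [Fintype.linearCombination_apply, toMul_sum, toMul_zsmul]

theorem prod_zpow_eq_one_iff_exists_eq_prod_zpow {G ι κ ι' : Type*} [CommGroup G] [Fintype ι]
    [Fintype κ] {a : ι → κ → ℤ} (ha : Submodule.span ℤ (Set.range a) = ⊤) {w : ι' → ι → ℤ}
    (hw : Submodule.span ℤ (Set.range w) = LinearMap.ker (Fintype.linearCombination ℤ a))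
    (x : ι → G) :
    (∀ i, ∏ j, x j ^ w i j = 1) ↔ ∃ t : κ → G, ∀ j, x j = ∏ k, t k ^ a j k := by
  have hx : (∀ i, ∏ j, x j ^ w i j = 1) ↔
      LinearMap.ker (Fintype.linearCombination ℤ a) ≤
        LinearMap.ker (Fintype.linearCombination ℤ (Additive.ofMul ∘ x)) := by
    simp only [← hw, Submodule.span_le, Set.range_subset_iff, SetLike.mem_coe, LinearMap.mem_ker,
      ← toMul_eq_one, toMul_linearCombination_ofMul]
  rw [hx, Fintype.ker_linearCombination_le_ker_iff ha, exists_linearMap_pi_apply_eq_iff,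
    Additive.ofMul.surjective.comp_left.exists]
  simp only [Function.comp_apply, ← ofMul_zpow, ← ofMul_prod, EmbeddingLike.apply_eq_iff_eq]

theorem exists_ne_zero_and_iff_exists_units {G₀ κ : Type*} [GroupWithZero G₀]
    (p : (κ → G₀) → Prop) :
    (∃ t : κ → G₀, (∀ k, t k ≠ 0) ∧ p t) ↔ ∃ s : κ → G₀ˣ, p fun k => s k :=
  ⟨fun ⟨t, ht, h⟩ => ⟨fun k => Units.mk0 (t k) (ht k), h⟩,
    fun ⟨s, h⟩ => ⟨_, fun k => (s k).ne_zero, h⟩⟩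

theorem torus_orbit_eq_binomial_zero_locus_general
    (n d : ℕ) (a : Fin n → Fin d → ℤ)
    (hgen : Submodule.span ℤ (Set.range a) = (⊤ : Submodule ℤ (Fin d → ℤ)))
    (w : Fin (n - d) → (Fin n → ℤ))
    (hker : Submodule.span ℤ (Set.range w) =
      LinearMap.ker (Matrix.toLin' (Matrix.of fun (k : Fin d) (i : Fin n) => a i k)))
    (x : Fin n → ℂ) (hx : ∀ i, x i ≠ 0) :
    (∀ i : Fin (n - d), ∏ j, x j ^ (w i j) = 1) ↔
      ∃ t : Fin d → ℂ, (∀ k, t k ≠ 0) ∧ ∀ i, x i = ∏ k, t k ^ (a i k) := by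
  set u : Fin n → ℂˣ := fun j => Units.mk0 (x j) (hx j)
  have hxu : x = fun j => (u j : ℂ) := rfl
  rw [Matrix.toLin'_of_transpose] at hker
  rw [exists_ne_zero_and_iff_exists_units, hxu]
  simpa [Units.ext_iff] using prod_zpow_eq_one_iff_exists_eq_prod_zpow hgen hker u

theorem torus_orbit_eq_binomial_zero_locus
    (n d : ℕ) (a : Fin n → Fin d → ℤ)
    (hgen : Submodule.span ℤ (Set.range a) = (⊤ : Submodule ℤ (Fin d → ℤ)))
    (w : Fin (n - d) → (Fin n → ℤ))
    (hw : LinearIndependent ℤ w)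
    (hker : Submodule.span ℤ (Set.range w) =
      LinearMap.ker (Matrix.toLin' (Matrix.of fun (k : Fin d) (i : Fin n) => a i k)))
    (x : Fin n → ℂ) (hx : ∀ i, x i ≠ 0) :
    (∀ i : Fin (n - d), ∏ j, x j ^ (w i j) = 1) ↔
      ∃ t : Fin d → ℂ, (∀ k, t k ≠ 0) ∧ ∀ i, x i = ∏ k, t k ^ (a i k) :=
  torus_orbit_eq_binomial_zero_locus_general n d a hgen w hker x hx
end
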